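/- Let X_1, …, X_n be {0,1}-valued random variables on a common probability space with p_i = P(X_i = 1), W = X_1 + ⋯ + X_n, and E[W] = λ > 0. Suppose the X_i are totally positively dependent (TPD). Then d_TV(L(W), Po(λ)) ≤ ((1 − e^{−λ})/λ)·( E[W²] + 2·Σ_{i=1}^n p_i² − λ(λ+1) ). -/

import Mathlib

/-!
Stein–Chen method. For `A ⊆ ℕ` the function `g_A` solving the Poisson Stein equation
`λ g (j + 1) - j g j = 1_A j - Po(λ)(A)` gives `P(W ∈ A) - Po(λ)(A) = E[λ g_A(W + 1) - W g_A(W)]`,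
and the increments of `g_A` are bounded by `c = (1 - e^{-λ}) / λ` (Barbour–Eagleson).
Write `W = X_i + W_i`. Then `E[λ g(W + 1) - W g(W)] = Σ_i (p_i E g(W + 1) - E X_i g(W_i + 1))`,
and `E g(W + 1) = E g(W_i + 1) + E X_i Δg(W_i + 1)` contributes at most `c p_i²`.
The rest, `-Cov(X_i, g(W_i + 1))`, is at most `c Cov(X_i, W_i)`: total positive dependence
applies to the non-decreasing function `k ↦ c k + g(k + 1)`. Summing over `i` gives
`c (E W² + 2 Σ p_i² - λ(λ + 1))`, and `Aᶜ` gives the bound in the other direction.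
-/

open MeasureTheory ProbabilityTheory

noncomputable def dTV (μ ν : Measure ℤ) : ℝ :=
  ⨆ B : Set ℤ, |(μ B).toReal - (ν B).toReal|

open Finset

noncomputable def poissonWeight (lam : ℝ) (j : ℕ) : ℝ :=
  Real.exp (-lam) * lam ^ j / (Nat.factorial j : ℝ)

noncomputable def poissonCDF (lam : ℝ) (j : ℕ) : ℝ :=
  ∑ i ∈ range (j + 1), poissonWeight lam i

noncomputable def poissonPartial (lam : ℝ) (A : Set ℕ) (j : ℕ) : ℝ :=
  ∑ i ∈ range (j + 1), A.indicator (poissonWeight lam) i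

noncomputable def poissonProb (lam : ℝ) (A : Set ℕ) : ℝ :=
  ∑' i, A.indicator (poissonWeight lam) i

noncomputable def steinSol (lam : ℝ) (A : Set ℕ) : ℕ → ℝ
  | 0 => 0
  | j + 1 => (poissonPartial lam A j - poissonProb lam A * poissonCDF lam j) /
      (lam * poissonWeight lam j)

section Poisson

variable {lam : ℝ}

lemma poissonWeight_pos (hl : 0 < lam) (j : ℕ) : 0 < poissonWeight lam j := by
  unfold poissonWeight
  positivity

lemma poissonWeight_nonneg (hl : 0 ≤ lam) (j : ℕ) : 0 ≤ poissonWeight lam j := by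
  unfold poissonWeight
  positivity

lemma poissonWeight_zero : poissonWeight lam 0 = Real.exp (-lam) := by
  simp [poissonWeight]

lemma succ_mul_poissonWeight_succ (j : ℕ) :
    ((j : ℝ) + 1) * poissonWeight lam (j + 1) = lam * poissonWeight lam j := by
  unfold poissonWeight
  rw [Nat.factorial_succ, pow_succ]
  push_cast
  field_simp

lemma hasSum_poissonWeight (lam : ℝ) : HasSum (poissonWeight lam) 1 := by
  have h := (NormedSpace.expSeries_div_hasSum_exp lam).mul_left (Real.exp (-lam))
  rw [← Real.exp_eq_exp_ℝ, ← Real.exp_add, neg_add_cancel, Real.exp_zero] at h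
  have e : poissonWeight lam = fun j => Real.exp (-lam) * (lam ^ j / (Nat.factorial j : ℝ)) :=
    funext fun j => mul_div_assoc _ _ _
  rwa [e]

/-- The ratio `poissonWeight lam (j + 1) / poissonWeight lam j = λ / (j + 1)` decreases in `j`. -/
lemma poissonWeight_mul_succ_le (hl : 0 ≤ lam) {i j : ℕ} (hij : i ≤ j) :
    poissonWeight lam i * poissonWeight lam (j + 1) ≤
      poissonWeight lam (i + 1) * poissonWeight lam j := by
  have hij' : (i : ℝ) ≤ j := by exact_mod_cast hij
  have hx := mul_nonneg (poissonWeight_nonneg hl i) (poissonWeight_nonneg hl (j + 1))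
  have hy := mul_nonneg (poissonWeight_nonneg hl (i + 1)) (poissonWeight_nonneg hl j)
  have h : ((j : ℝ) + 1) * (poissonWeight lam i * poissonWeight lam (j + 1)) =
      ((i : ℝ) + 1) * (poissonWeight lam (i + 1) * poissonWeight lam j) := by
    linear_combination poissonWeight lam i * succ_mul_poissonWeight_succ (lam := lam) j -
      poissonWeight lam j * succ_mul_poissonWeight_succ (lam := lam) i
  nlinarith

lemma poissonCDF_mul_succ_le (hl : 0 ≤ lam) (k : ℕ) :
    poissonCDF lam k * poissonWeight lam (k + 1) ≤
      (poissonCDF lam (k + 1) - poissonWeight lam 0) * poissonWeight lam k := by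
  rw [poissonCDF, poissonCDF, sum_range_succ' _ (k + 1), add_sub_cancel_right, sum_mul, sum_mul]
  exact sum_le_sum fun i hi =>
    poissonWeight_mul_succ_le hl (Nat.lt_succ_iff.mp (mem_range.mp hi))

lemma one_sub_poissonCDF_eq_tsum (j : ℕ) :
    1 - poissonCDF lam j = ∑' i, poissonWeight lam (i + (j + 1)) := by
  rw [← (hasSum_poissonWeight lam).tsum_eq, poissonCDF,
    ← (hasSum_poissonWeight lam).summable.sum_add_tsum_nat_add (j + 1), add_sub_cancel_left]

lemma one_sub_poissonCDF_mul_le (hl : 0 ≤ lam) (k : ℕ) :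
    (1 - poissonCDF lam (k + 1)) * poissonWeight lam k ≤
      (1 - poissonCDF lam k) * poissonWeight lam (k + 1) := by
  have hs := (hasSum_poissonWeight lam).summable
  rw [one_sub_poissonCDF_eq_tsum, one_sub_poissonCDF_eq_tsum, ← tsum_mul_right, ← tsum_mul_right]
  refine Summable.tsum_le_tsum (fun i => ?_)
    ((hs.comp_injective (add_left_injective _)).mul_right _)
    ((hs.comp_injective (add_left_injective _)).mul_right _)
  calc poissonWeight lam (i + (k + 1) + 1) * poissonWeight lam k
      = poissonWeight lam k * poissonWeight lam (i + (k + 1) + 1) := mul_comm _ _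
    _ ≤ poissonWeight lam (k + 1) * poissonWeight lam (i + (k + 1)) :=
      poissonWeight_mul_succ_le hl (by omega)
    _ = poissonWeight lam (i + (k + 1)) * poissonWeight lam (k + 1) := mul_comm _ _

lemma summable_indicator_poissonWeight (A : Set ℕ) :
    Summable (A.indicator (poissonWeight lam)) :=
  (hasSum_poissonWeight lam).summable.indicator A

lemma poissonPartial_nonneg (hl : 0 ≤ lam) (A : Set ℕ) (j : ℕ) : 0 ≤ poissonPartial lam A j :=
  sum_nonneg fun i _ => Set.indicator_nonneg (fun k _ => poissonWeight_nonneg hl k) i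

lemma poissonPartial_le_poissonProb (hl : 0 ≤ lam) (A : Set ℕ) (j : ℕ) :
    poissonPartial lam A j ≤ poissonProb lam A :=
  (summable_indicator_poissonWeight A).sum_le_tsum _
    fun i _ => Set.indicator_nonneg (fun k _ => poissonWeight_nonneg hl k) i

lemma poissonPartial_succ (A : Set ℕ) (j : ℕ) :
    poissonPartial lam A (j + 1) =
      poissonPartial lam A j + A.indicator (poissonWeight lam) (j + 1) :=
  sum_range_succ _ _

lemma poissonCDF_succ (j : ℕ) :
    poissonCDF lam (j + 1) = poissonCDF lam j + poissonWeight lam (j + 1) :=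
  sum_range_succ _ _

lemma poissonPartial_union {A B : Set ℕ} (h : Disjoint A B) (j : ℕ) :
    poissonPartial lam (A ∪ B) j = poissonPartial lam A j + poissonPartial lam B j := by
  simp only [poissonPartial, Set.indicator_union_of_disjoint h, sum_add_distrib]

lemma poissonProb_union {A B : Set ℕ} (h : Disjoint A B) :
    poissonProb lam (A ∪ B) = poissonProb lam A + poissonProb lam B := by
  simp only [poissonProb, Set.indicator_union_of_disjoint h]
  exact (summable_indicator_poissonWeight A).tsum_add (summable_indicator_poissonWeight B)

lemma poissonPartial_univ (j : ℕ) : poissonPartial lam Set.univ j = poissonCDF lam j := by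
  simp [poissonPartial, poissonCDF]

lemma poissonProb_univ : poissonProb lam Set.univ = 1 := by
  simp [poissonProb, (hasSum_poissonWeight lam).tsum_eq]

lemma poissonProb_singleton (j : ℕ) : poissonProb lam {j} = poissonWeight lam j := by
  simp [poissonProb, Set.indicator_singleton]

end Poisson

section Stein

variable {lam : ℝ}

lemma steinSol_union {A B : Set ℕ} (h : Disjoint A B) (j : ℕ) :
    steinSol lam (A ∪ B) j = steinSol lam A j + steinSol lam B j := by
  cases j with
  | zero => simp [steinSol]
  | succ j =>
    simp only [steinSol, poissonPartial_union h, poissonProb_union h]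
    ring

lemma steinSol_univ (j : ℕ) : steinSol lam Set.univ j = 0 := by
  cases j with
  | zero => rfl
  | succ j => simp [steinSol, poissonPartial_univ, poissonProb_univ]

lemma steinSol_compl (A : Set ℕ) (j : ℕ) : steinSol lam Aᶜ j = -steinSol lam A j := by
  have h := steinSol_union (lam := lam) disjoint_compl_right (A := A) j
  rw [Set.union_compl_self, steinSol_univ] at h
  linarith

lemma steinSol_equation (hl : 0 < lam) (A : Set ℕ) (j : ℕ) :
    lam * steinSol lam A (j + 1) - j * steinSol lam A j =
      A.indicator 1 j - poissonProb lam A := by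
  have hπ := (poissonWeight_pos hl j).ne'
  cases j with
  | zero =>
    simp only [steinSol, poissonPartial, poissonCDF, zero_add, sum_range_one, Nat.cast_zero,
      zero_mul, sub_zero]
    by_cases hA : 0 ∈ A <;> simp [hA] <;> field_simp
  | succ k =>
    have hπk := (poissonWeight_pos hl k).ne'
    have hrec := succ_mul_poissonWeight_succ (lam := lam) k
    simp only [steinSol, poissonPartial_succ, poissonCDF_succ, Nat.cast_succ]
    set S := poissonPartial lam A k
    set F := poissonCDF lam k
    by_cases hA : k + 1 ∈ A <;> simp only [hA, Set.indicator_of_mem, Set.indicator_of_notMem,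
      not_false_eq_true, Pi.one_apply] <;> field_simp <;>
      linear_combination (poissonProb lam A * F - S) * hrec

/-- With `a = poissonPartial lam A k = poissonPartial lam A (k + 1)` and
`b = poissonProb lam A - a ≥ 0`, the numerator of `steinSol lam A (j + 1)` for `j = k, k + 1` is
`a (1 - F j) - b F j` where `F = poissonCDF lam`; and, with `π = poissonWeight lam`,
`(1 - F j) / π j` decreases while `F j / π j` increases. -/
lemma steinSol_succ_sub_le_zero (hl : 0 < lam) {A : Set ℕ} {k : ℕ} (hk : k + 1 ∉ A) :
    steinSol lam A (k + 2) - steinSol lam A (k + 1) ≤ 0 := by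
  have ha := poissonPartial_nonneg hl.le A k
  have hb := sub_nonneg.mpr (poissonPartial_le_poissonProb hl.le A k)
  have hT := mul_le_mul_of_nonneg_left (one_sub_poissonCDF_mul_le hl.le k) ha
  have hF : poissonCDF lam k * poissonWeight lam (k + 1) ≤
      poissonCDF lam (k + 1) * poissonWeight lam k := by
    nlinarith [poissonCDF_mul_succ_le hl.le k, poissonWeight_nonneg hl.le 0,
      poissonWeight_nonneg hl.le k]
  have hF' := mul_le_mul_of_nonneg_left hF hb
  simp only [steinSol, poissonPartial_succ, Set.indicator_of_notMem hk, add_zero]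
  rw [sub_nonpos, div_le_div_iff₀ (mul_pos hl (poissonWeight_pos hl _))
    (mul_pos hl (poissonWeight_pos hl _))]
  nlinarith

lemma steinSol_singleton_succ_sub_le (hl : 0 < lam) (k : ℕ) :
    steinSol lam {k + 1} (k + 2) - steinSol lam {k + 1} (k + 1) ≤
      (1 - Real.exp (-lam)) / lam := by
  have hS : poissonPartial lam {k + 1} k = 0 :=
    sum_eq_zero fun i hi => Set.indicator_of_notMem (by simp at hi ⊢; omega) _
  have hπk := poissonWeight_pos hl k
  have hπk1 := poissonWeight_pos hl (k + 1)
  simp only [steinSol, poissonPartial_succ, hS, poissonProb_singleton,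
    Set.indicator_of_mem (Set.mem_singleton _), ← poissonWeight_zero]
  rw [div_sub_div _ _ (by positivity) (by positivity), div_le_div_iff₀ (by positivity) hl]
  nlinarith [mul_le_mul_of_nonneg_left (poissonCDF_mul_succ_le hl.le k)
    (by positivity : 0 ≤ lam ^ 2 * poissonWeight lam (k + 1))]

/-- Splitting off `{k + 1}` from `A`, only the singleton part can increase at `k + 1`. -/
lemma steinSol_succ_sub_le (hl : 0 < lam) (A : Set ℕ) (k : ℕ) :
    steinSol lam A (k + 2) - steinSol lam A (k + 1) ≤ (1 - Real.exp (-lam)) / lam := by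
  have hc : 0 ≤ (1 - Real.exp (-lam)) / lam :=
    div_nonneg (sub_nonneg.mpr (Real.exp_le_one_iff.mpr (by linarith))) hl.le
  by_cases hk : k + 1 ∈ A
  · have hdisj : Disjoint (A \ {k + 1}) {k + 1} := Set.disjoint_sdiff_left
    rw [← Set.sdiff_union_of_subset (Set.singleton_subset_iff.mpr hk), steinSol_union hdisj,
      steinSol_union hdisj]
    linarith [steinSol_succ_sub_le_zero hl (A := A \ {k + 1}) (k := k) fun h => h.2 rfl,
      steinSol_singleton_succ_sub_le hl k]
  · linarith [steinSol_succ_sub_le_zero hl hk]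

lemma abs_steinSol_succ_sub_le (hl : 0 < lam) (A : Set ℕ) (k : ℕ) :
    |steinSol lam A (k + 2) - steinSol lam A (k + 1)| ≤ (1 - Real.exp (-lam)) / lam := by
  have hcompl := steinSol_succ_sub_le hl Aᶜ k
  rw [steinSol_compl, steinSol_compl] at hcompl
  exact abs_le.mpr ⟨by linarith, steinSol_succ_sub_le hl A k⟩

end Stein

section Probability

variable {Ω : Type*} [MeasurableSpace Ω] {P : Measure Ω}

lemma integrable_comp_of_le [IsFiniteMeasure P] {f : Ω → ℕ} (hf : Measurable f) {N : ℕ}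
    (hN : ∀ ω, f ω ≤ N) (φ : ℕ → ℝ) : Integrable (fun ω => φ (f ω)) P := by
  refine .of_bound (Measurable.of_discrete.comp hf).aestronglyMeasurable
    (∑ m ∈ range (N + 1), |φ m|) (ae_of_all _ fun ω => ?_)
  rw [Real.norm_eq_abs]
  exact single_le_sum (f := fun m => |φ m|) (fun m _ => abs_nonneg _)
    (mem_range.mpr (Nat.lt_succ_of_le (hN ω)))

lemma integrable_mul_comp_of_le [IsFiniteMeasure P] {Y f : Ω → ℕ} (hY : Measurable Y)
    (hY1 : ∀ ω, Y ω ≤ 1) (hf : Measurable f) {N : ℕ} (hN : ∀ ω, f ω ≤ N) (φ : ℕ → ℝ) :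
    Integrable (fun ω => (Y ω : ℝ) * φ (f ω)) P :=
  (integrable_comp_of_le hf hN φ).bdd_mul (c := 1)
    (Measurable.of_discrete.comp hY).aestronglyMeasurable
    (ae_of_all _ fun ω => by simpa using hY1 ω)

lemma integral_natCast_eq_measureReal {Y : Ω → ℕ} (hY : Measurable Y) (hY1 : ∀ ω, Y ω ≤ 1) :
    ∫ ω, (Y ω : ℝ) ∂P = P.real {ω | Y ω = 1} := by
  have h : (fun ω => (Y ω : ℝ)) = {ω | Y ω = 1}.indicator 1 := by
    funext ω
    rcases Nat.le_one_iff_eq_zero_or_eq_one.mp (hY1 ω) with h | h <;> simp [h]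
  rw [h]
  exact integral_indicator_one (hY (measurableSet_singleton 1))

/-- `Y` plays the role of `X_i` and `U` that of `W`, so `U - Y` is `W_i`. -/
lemma stein_summand_le [IsProbabilityMeasure P] {Y U : Ω → ℕ} (hY : Measurable Y)
    (hU : Measurable U) (hY1 : ∀ ω, Y ω ≤ 1) (hYU : ∀ ω, Y ω ≤ U ω) {N : ℕ} (hUN : ∀ ω, U ω ≤ N)
    (hcov : ∀ h : ℕ → ℝ, Monotone h →
      (∫ ω, (Y ω : ℝ) ∂P) * ∫ ω, h (U ω - Y ω) ∂P ≤ ∫ ω, (Y ω : ℝ) * h (U ω - Y ω) ∂P)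
    {G : ℕ → ℝ} {c : ℝ} (hG : ∀ k, |G (k + 2) - G (k + 1)| ≤ c) :
    (∫ ω, (Y ω : ℝ) ∂P) * ∫ ω, G (U ω + 1) ∂P - ∫ ω, (Y ω : ℝ) * G (U ω) ∂P ≤
      c * ((∫ ω, (Y ω : ℝ) ∂P) ^ 2 + (∫ ω, (Y ω : ℝ) * ((U ω - Y ω : ℕ) : ℝ) ∂P -
        (∫ ω, (Y ω : ℝ) ∂P) * ∫ ω, ((U ω - Y ω : ℕ) : ℝ) ∂P)) := by
  set p := ∫ ω, (Y ω : ℝ) ∂P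
  have hp : 0 ≤ p := integral_nonneg fun ω => Nat.cast_nonneg _
  have hV : Measurable fun ω => U ω - Y ω := hU.sub hY
  have hVN : ∀ ω, U ω - Y ω ≤ N := fun ω => (Nat.sub_le _ _).trans (hUN ω)
  have iV : Integrable (fun ω => ((U ω - Y ω : ℕ) : ℝ)) P := integrable_comp_of_le hV hVN _
  have iG : Integrable (fun ω => G (U ω - Y ω + 1)) P :=
    integrable_comp_of_le hV hVN fun k => G (k + 1)
  have iYV : Integrable (fun ω => (Y ω : ℝ) * ((U ω - Y ω : ℕ) : ℝ)) P :=
    integrable_mul_comp_of_le hY hY1 hV hVN _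
  have iYG : Integrable (fun ω => (Y ω : ℝ) * G (U ω - Y ω + 1)) P :=
    integrable_mul_comp_of_le hY hY1 hV hVN fun k => G (k + 1)
  have iYΔ : Integrable (fun ω => (Y ω : ℝ) * (G (U ω - Y ω + 2) - G (U ω - Y ω + 1))) P :=
    integrable_mul_comp_of_le hY hY1 hV hVN fun k => G (k + 2) - G (k + 1)
  have hsplit : ∫ ω, G (U ω + 1) ∂P = ∫ ω, G (U ω - Y ω + 1) ∂P +
      ∫ ω, (Y ω : ℝ) * (G (U ω - Y ω + 2) - G (U ω - Y ω + 1)) ∂P := by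
    rw [← integral_add iG iYΔ]
    congr 1 with ω
    have := hYU ω
    rcases Nat.le_one_iff_eq_zero_or_eq_one.mp (hY1 ω) with h | h
    · simp [h]
    · rw [h, show U ω - 1 + 2 = U ω + 1 by omega, show U ω - 1 + 1 = U ω by omega]
      ring
  have hshift : ∫ ω, (Y ω : ℝ) * G (U ω) ∂P = ∫ ω, (Y ω : ℝ) * G (U ω - Y ω + 1) ∂P := by
    congr 1 with ω
    have := hYU ω
    rcases Nat.le_one_iff_eq_zero_or_eq_one.mp (hY1 ω) with h | h
    · simp [h]
    · rw [h, show U ω - 1 + 1 = U ω by omega]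
  have hjump : ∫ ω, (Y ω : ℝ) * (G (U ω - Y ω + 2) - G (U ω - Y ω + 1)) ∂P ≤ p * c := by
    rw [← integral_mul_const]
    refine integral_mono iYΔ ((integrable_comp_of_le hY hY1 _).mul_const c) fun ω => ?_
    exact mul_le_mul_of_nonneg_left ((le_abs_self _).trans (hG _)) (Nat.cast_nonneg _)
  -- `ΔG ≥ -c` makes this function non-decreasing, so the covariance hypothesis applies to it.
  have hmono : Monotone fun k : ℕ => c * k + G (k + 1) := monotone_nat_of_le_succ fun k => by
    have := (abs_le.mp (hG k)).1
    push_cast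
    linarith
  have hpos := hcov _ hmono
  have hYmul : ∫ ω, (Y ω : ℝ) * (c * ((U ω - Y ω : ℕ) : ℝ) + G (U ω - Y ω + 1)) ∂P =
      c * ∫ ω, (Y ω : ℝ) * ((U ω - Y ω : ℕ) : ℝ) ∂P + ∫ ω, (Y ω : ℝ) * G (U ω - Y ω + 1) ∂P := by
    rw [← integral_const_mul, ← integral_add (iYV.const_mul c) iYG]
    congr 1 with ω
    ring
  rw [integral_add (iV.const_mul c) iG, integral_const_mul, hYmul] at hpos
  rw [hsplit, hshift]
  nlinarith [mul_le_mul_of_nonneg_left hjump hp]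

lemma stein_sum_le [IsProbabilityMeasure P] {n : ℕ} {X : Fin n → Ω → ℕ}
    (hX : ∀ i, Measurable (X i)) (hX1 : ∀ i ω, X i ω ≤ 1) {W : Ω → ℕ} (hW : ∀ ω, W ω = ∑ i, X i ω)
    (hcov : ∀ i (h : ℕ → ℝ), Monotone h →
      (∫ ω, (X i ω : ℝ) ∂P) * ∫ ω, h (W ω - X i ω) ∂P ≤ ∫ ω, (X i ω : ℝ) * h (W ω - X i ω) ∂P)
    {G : ℕ → ℝ} {c : ℝ} (hG : ∀ k, |G (k + 2) - G (k + 1)| ≤ c) :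
    (∫ ω, (W ω : ℝ) ∂P) * ∫ ω, G (W ω + 1) ∂P - ∫ ω, (W ω : ℝ) * G (W ω) ∂P ≤
      c * (∫ ω, (W ω : ℝ) ^ 2 ∂P + 2 * ∑ i, (∫ ω, (X i ω : ℝ) ∂P) ^ 2 -
        (∫ ω, (W ω : ℝ) ∂P) * ((∫ ω, (W ω : ℝ) ∂P) + 1)) := by
  have hWm : Measurable W := (funext hW).symm ▸ Finset.measurable_sum univ fun i _ => hX i
  have hXW : ∀ i ω, X i ω ≤ W ω := fun i ω =>
    hW ω ▸ single_le_sum (f := fun j => X j ω) (fun j _ => Nat.zero_le _) (mem_univ i)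
  have hWn : ∀ ω, W ω ≤ n := fun ω => hW ω ▸ (sum_le_sum fun i _ => hX1 i ω).trans (by simp)
  have hWcast : ∀ ω, (W ω : ℝ) = ∑ i, (X i ω : ℝ) := fun ω => by rw [hW]; push_cast; rfl
  set p := fun i => ∫ ω, (X i ω : ℝ) ∂P
  have iX : ∀ i, Integrable (fun ω => (X i ω : ℝ)) P := fun i =>
    integrable_comp_of_le (hX i) (hX1 i) Nat.cast
  have iXW : ∀ i, Integrable (fun ω => (X i ω : ℝ) * W ω) P := fun i =>
    integrable_mul_comp_of_le (hX i) (hX1 i) hWm hWn Nat.cast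
  have hEW : ∫ ω, (W ω : ℝ) ∂P = ∑ i, p i := by
    simp_rw [hWcast]
    exact integral_finsetSum _ fun i _ => iX i
  have hEWG : ∫ ω, (W ω : ℝ) * G (W ω) ∂P = ∑ i, ∫ ω, (X i ω : ℝ) * G (W ω) ∂P := by
    simp_rw [hWcast, sum_mul]
    exact integral_finsetSum _ fun i _ => integrable_mul_comp_of_le (hX i) (hX1 i) hWm hWn G
  have hEW2 : ∫ ω, (W ω : ℝ) ^ 2 ∂P = ∑ i, ∫ ω, (X i ω : ℝ) * W ω ∂P := by
    rw [← integral_finsetSum _ fun i _ => iXW i]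
    congr 1 with ω
    rw [← sum_mul, ← hWcast, sq]
  have hcross : ∀ i, ∫ ω, (X i ω : ℝ) * ((W ω - X i ω : ℕ) : ℝ) ∂P =
      ∫ ω, (X i ω : ℝ) * W ω ∂P - p i := fun i => by
    rw [← integral_sub (iXW i) (iX i)]
    congr 1 with ω
    rw [Nat.cast_sub (hXW i ω)]
    rcases Nat.le_one_iff_eq_zero_or_eq_one.mp (hX1 i ω) with h | h <;> simp [h]
  have hrest : ∀ i, ∫ ω, ((W ω - X i ω : ℕ) : ℝ) ∂P = ∫ ω, (W ω : ℝ) ∂P - p i := fun i => by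
    rw [← integral_sub (integrable_comp_of_le hWm hWn Nat.cast) (iX i)]
    congr 1 with ω
    rw [Nat.cast_sub (hXW i ω)]
  calc _ = ∑ i, (p i * ∫ ω, G (W ω + 1) ∂P - ∫ ω, (X i ω : ℝ) * G (W ω) ∂P) := by
        rw [hEW, hEWG, sum_mul, ← sum_sub_distrib]
    _ ≤ ∑ i, c * (p i ^ 2 + (∫ ω, (X i ω : ℝ) * W ω ∂P - p i -
          p i * (∫ ω, (W ω : ℝ) ∂P - p i))) := sum_le_sum fun i _ => by
        have := stein_summand_le (hX i) hWm (hX1 i) (hXW i) hWn (hcov i) hG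
        rwa [hcross i, hrest i] at this
    _ = _ := by
        rw [← mul_sum, hEW2]
        simp only [p, mul_sub, sum_add_distrib, sum_sub_distrib, ← sum_mul, ← hEW, ← sq]
        ring

lemma measureReal_preimage_sub_poissonProb_eq [IsProbabilityMeasure P] {W : Ω → ℕ}
    (hW : Measurable W) {N : ℕ} (hWN : ∀ ω, W ω ≤ N) {lam : ℝ} (hl : 0 < lam) (A : Set ℕ) :
    P.real (W ⁻¹' A) - poissonProb lam A =
      lam * ∫ ω, steinSol lam A (W ω + 1) ∂P - ∫ ω, (W ω : ℝ) * steinSol lam A (W ω) ∂P := by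
  have iG : Integrable (fun ω => steinSol lam A (W ω + 1)) P :=
    integrable_comp_of_le hW hWN fun k => steinSol lam A (k + 1)
  have iWG : Integrable (fun ω => (W ω : ℝ) * steinSol lam A (W ω)) P :=
    integrable_comp_of_le hW hWN fun k => k * steinSol lam A k
  have hind : P.real (W ⁻¹' A) = ∫ ω, A.indicator 1 (W ω) ∂P :=
    (integral_indicator_one (hW MeasurableSet.of_discrete)).symm
  calc P.real (W ⁻¹' A) - poissonProb lam A
      = ∫ ω, (A.indicator 1 (W ω) - poissonProb lam A) ∂P := by
        rw [integral_sub (integrable_comp_of_le hW hWN _) (integrable_const _), hind]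
        simp
    _ = ∫ ω, (lam * steinSol lam A (W ω + 1) - W ω * steinSol lam A (W ω)) ∂P := by
        simp only [steinSol_equation hl]
    _ = _ := by rw [integral_sub (iG.const_mul lam) iWG, integral_const_mul]

lemma measureReal_preimage_eq_poissonProb [IsFiniteMeasure P] {π : Ω → ℕ}
    (hπ : Measurable π) {lam : ℝ} (hpmf : ∀ j, P.real (π ⁻¹' {j}) = poissonWeight lam j)
    (A : Set ℕ) : P.real (π ⁻¹' A) = poissonProb lam A := by
  rw [measureReal_def, ← tsum_measure_preimage_singleton A.to_countable
    fun j _ => hπ (measurableSet_singleton j), ENNReal.tsum_toReal_eq fun _ => measure_ne_top _ _]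
  simp only [← measureReal_def, hpmf]
  exact tsum_subtype A (poissonWeight lam)

end Probability

lemma dTV_map_natCast_le {Ω Ω' : Type*} [MeasurableSpace Ω] [MeasurableSpace Ω']
    {P : Measure Ω} [IsProbabilityMeasure P] {P' : Measure Ω'} [IsProbabilityMeasure P']
    {f : Ω → ℕ} {g : Ω' → ℕ} (hf : Measurable f) (hg : Measurable g) {r : ℝ}
    (h : ∀ A : Set ℕ, P.real (f ⁻¹' A) - P'.real (g ⁻¹' A) ≤ r) :
    dTV (P.map fun ω => (f ω : ℤ)) (P'.map fun ω => (g ω : ℤ)) ≤ r := by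
  refine ciSup_le fun B => ?_
  have hf' : Measurable fun ω => (f ω : ℤ) := Measurable.of_discrete.comp hf
  have hg' : Measurable fun ω => (g ω : ℤ) := Measurable.of_discrete.comp hg
  rw [Measure.map_apply hf' MeasurableSet.of_discrete,
    Measure.map_apply hg' MeasurableSet.of_discrete]
  let A : Set ℕ := (Nat.cast : ℕ → ℤ) ⁻¹' B
  change |P.real (f ⁻¹' A) - P'.real (g ⁻¹' A)| ≤ r
  have hcompl := h Aᶜ
  rw [Set.preimage_compl, Set.preimage_compl,
    probReal_compl_eq_one_sub (hf MeasurableSet.of_discrete),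
    probReal_compl_eq_one_sub (hg MeasurableSet.of_discrete)] at hcompl
  exact abs_le.mpr ⟨by linarith [h A], h A⟩

/-- Theorem 2 of Daly, Lefèvre, Utev: Poisson approximation for a sum of
totally positively dependent (TPD) indicators with `E[W] = λ`. -/
theorem stmt10
    {Ω Ω' : Type*} [MeasurableSpace Ω] [MeasurableSpace Ω']
    (P : Measure Ω) [IsProbabilityMeasure P]
    (P' : Measure Ω') [IsProbabilityMeasure P']
    (n : ℕ) (X : Fin n → Ω → ℕ) (hXm : ∀ i, Measurable (X i))
    (hX01 : ∀ i ω, X i ω ≤ 1)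
    (p : Fin n → ℝ) (hp : ∀ i, p i = (P {ω | X i ω = 1}).toReal)
    (W : Ω → ℕ) (hWdef : ∀ ω, W ω = ∑ i, X i ω)
    (lam : ℝ) (hlam : lam = ∫ ω, (W ω : ℝ) ∂P) (hlam0 : 0 < lam)
    (hTPD : ∀ (i : Fin n) (g₁ g₂ : ℝ → ℝ), Monotone g₁ → Monotone g₂ →
      (∫ ω, g₁ (X i ω : ℝ) ∂P) * (∫ ω, g₂ ((W ω - X i ω : ℕ) : ℝ) ∂P) ≤
        ∫ ω, g₁ (X i ω : ℝ) * g₂ ((W ω - X i ω : ℕ) : ℝ) ∂P)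
    (π : Ω' → ℕ) (hπ : Measurable π)
    (hπpmf : ∀ j : ℕ, (P' {ω | π ω = j}).toReal =
      Real.exp (-lam) * lam ^ j / (Nat.factorial j : ℝ)) :
    dTV (Measure.map (fun ω => (W ω : ℤ)) P) (Measure.map (fun ω => (π ω : ℤ)) P') ≤
      ((1 - Real.exp (-lam)) / lam) *
        ((∫ ω, (W ω : ℝ) ^ 2 ∂P) + 2 * (∑ i, (p i) ^ 2) - lam * (lam + 1)) := by
  have hW : Measurable W := (funext hWdef).symm ▸ Finset.measurable_sum univ fun i _ => hXm i
  have hWn : ∀ ω, W ω ≤ n := fun ω =>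
    hWdef ω ▸ (sum_le_sum fun i _ => hX01 i ω).trans (by simp)
  have hcov : ∀ i (h : ℕ → ℝ), Monotone h →
      (∫ ω, (X i ω : ℝ) ∂P) * ∫ ω, h (W ω - X i ω) ∂P ≤
        ∫ ω, (X i ω : ℝ) * h (W ω - X i ω) ∂P := fun i h hh => by
    simpa using hTPD i id (fun x => h ⌊x⌋₊) monotone_id (hh.comp Nat.floor_mono)
  have hpX : ∀ i, ∫ ω, (X i ω : ℝ) ∂P = p i := fun i =>
    (integral_natCast_eq_measureReal (hXm i) (hX01 i)).trans (hp i).symm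
  refine dTV_map_natCast_le hW hπ fun A => ?_
  rw [measureReal_preimage_eq_poissonProb hπ hπpmf,
    measureReal_preimage_sub_poissonProb_eq hW hWn hlam0]
  have := stein_sum_le hXm hX01 hWdef hcov (abs_steinSol_succ_sub_le hlam0 A)
  simpa only [← hlam, hpX] using this
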